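/- Let G be a locally compact metrizable group with left-invariant metric ρ and left Haar measure ν satisfying the doubling condition, let K be a compact subgroup of G with G ≠ K, and let q ∈ (1,∞]. Then the Hardy space H^{1,q}(G/K) is nontrivial (contains a nonzero element) and is a Banach space with the norm ‖f‖ = inf Σ|λ_j| over atomic decompositions. -/

import Mathlib

/-!
Statement 3 (Proposition 1 of the paper).

`G` is a locally compact metrizable group with left-invariant metric (hypothesis `hleft`)
and left Haar measure `ν` satisfying the doubling condition; `K` is a compact subgroup with
`G ≠ K`.  Then the Hardy space `H^{1,q}(G/K)` (defined by atomic decompositions into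
right-`K`-invariant `(1,q)`-atoms, with the norm `‖f‖ = inf ∑ |λ_j|`, encoded below by
`hardyNorm`, which is `∞` exactly off `H^{1,q}(G/K)`) is nontrivial and is a Banach space:
the conclusion records nontriviality, the norm axioms (subadditivity, absolute homogeneity,
and definiteness up to `λ`-a.e. equality, where `λ = ν.map QuotientGroup.mk` is the invariant
measure on `G/K` given by Weil's formula), and completeness in the form of the
"absolutely convergent series converge" criterion.
-/

open MeasureTheory Metric Filter Topology ENNReal NNReal

noncomputable section

namespace Stmt3

variable {G : Type*} [Group G] [MetricSpace G] [IsTopologicalGroup G]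
  [MeasurableSpace G] [BorelSpace G] [LocallyCompactSpace G]

/-- A `(1,q)`-atom on `G` (with `q ∈ (1,∞]` represented by `q : ℝ≥0∞`). -/
def IsAtom1q (ν : Measure G) (q : ℝ≥0∞) (a : G → ℂ) : Prop :=
  AEStronglyMeasurable a ν ∧
    ((∃ (x : G) (r : ℝ), 0 < r ∧ Function.support a ⊆ ball x r ∧
        eLpNorm a q ν ≤ ν (ball x r) ^ (1 / q.toReal - 1) ∧
        ∫ y, a y ∂ν = 0) ∨
      (ν Set.univ = 1 ∧ a = fun _ => (1 : ℂ)))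

/-- Right-`K`-invariance of a function on `G`. -/
def RightInvariant (K : Subgroup G) (a : G → ℂ) : Prop :=
  ∀ (x : G), ∀ k ∈ K, a (x * k) = a x

/-- The atomic `H^{1,q}(G/K)` norm. -/
def hardyNorm (ν : Measure G) (K : Subgroup G) (q : ℝ≥0∞) (f : G ⧸ K → ℂ) : ℝ≥0∞ :=
  ⨅ (c : ℕ → ℂ) (a : ℕ → G → ℂ) (_ : ∀ j, IsAtom1q ν q (a j))
    (_ : ∀ j, RightInvariant K (a j)) (_ : Summable fun j => ‖c j‖)
    (_ : ∀ᵐ x ∂ν, f (QuotientGroup.mk x) = ∑' j, c j * a j x),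
      ENNReal.ofReal (∑' j, ‖c j‖)

end Stmt3

/-!
Every `(1,q)`-atom has `L¹` norm at most `1` (Hölder's inequality on its ball), so an atomic series
`∑ c_j a_j` with `∑ |c_j| < ∞` converges absolutely almost everywhere. Hence countably many
near-optimal decompositions can be merged into one, which makes the norm countably subadditive:
this gives the triangle inequality and completeness. If `‖f‖ = 0`, the constant series `f + f + ⋯`
has summable norms, so it converges a.e. and `f = 0` a.e. on `G`; this passes to `G/K` through
a measurable `K`-saturated null hull built with the Haar measure of `K`. For `z ∉ K` and a small
ball `B` around `1`, the sets `B K` and `z B K` are disjoint, and the normalized difference of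
their indicators is a nonzero atom on `G/K`. Doubling and local compactness give all balls finite
measure; by a packing argument balls are then totally bounded, so `G` is second countable.
-/

open scoped Pointwise

section InvariantMetric

variable {G : Type*} [Group G] [MetricSpace G] [IsIsometricSMul G G]

theorem mul_subset_ball_one {s t : Set G} {r r' : ℝ} (hs : s ⊆ ball 1 r) (ht : t ⊆ ball 1 r') :
    s * t ⊆ ball 1 (r + r') := by
  refine Set.mul_subset_iff.mpr fun x hx y hy => ?_
  have hxy : dist (x * y) x = dist y 1 := by simpa using dist_smul x y 1
  have hx := mem_ball.mp (hs hx)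
  have hy := mem_ball.mp (ht hy)
  rw [mem_ball]
  linarith [dist_triangle (x * y) x 1]

variable [MeasurableSpace G] (ν : Measure G) [ν.IsMulLeftInvariant]

theorem measure_ball_eq_measure_ball_one (x : G) (r : ℝ) : ν (ball x r) = ν (ball 1 r) := by
  rw [← measure_smul ν x (ball 1 r), Metric.smul_ball, smul_eq_mul, mul_one]

theorem measure_ball_ne_top_of_doubling [LocallyCompactSpace G] [IsFiniteMeasureOnCompacts ν]
    {C : ℝ} (hC : ∀ (x : G) (r : ℝ), 0 < r →
      ν (ball x (2 * r)) ≤ ENNReal.ofReal C * ν (ball x r)) (x : G) (r : ℝ) :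
    ν (ball x r) ≠ ⊤ := by
  obtain ⟨s, hs, hs1⟩ := exists_compact_mem_nhds (1 : G)
  obtain ⟨r₀, hr₀, hsub⟩ := Metric.mem_nhds_iff.mp hs1
  have hpow : ∀ n : ℕ, ν (ball 1 (2 ^ n * r₀)) ≠ ⊤ := by
    intro n
    induction n with
    | zero => simpa using ne_top_of_le_ne_top hs.measure_ne_top (measure_mono hsub)
    | succ n ih =>
      rw [pow_succ', mul_assoc]
      exact ne_top_of_le_ne_top (ENNReal.mul_ne_top ENNReal.ofReal_ne_top ih)
        (hC 1 _ (by positivity))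
  obtain ⟨n, hn⟩ := pow_unbounded_of_one_lt (r / r₀) one_lt_two
  rw [measure_ball_eq_measure_ball_one]
  refine ne_top_of_le_ne_top (hpow n) (measure_mono (ball_subset_ball ?_))
  exact ((div_lt_iff₀ hr₀).mp hn).le

variable [OpensMeasurableSpace G] [ν.IsOpenPosMeasure]

theorem totallyBounded_ball_one (hfin : ∀ r, ν (ball (1 : G) r) ≠ ⊤) (R : ℝ) :
    TotallyBounded (ball (1 : G) R) := by
  rw [Metric.totallyBounded_iff]
  intro ε hε
  by_contra! hcover
  obtain ⟨x, hxR, hsep⟩ := exists_seq_of_forall_finset_exists (· ∈ ball (1 : G) R)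
    (fun y z => ε ≤ dist y z) fun s _ => by
      obtain ⟨z, hz, hzs⟩ := Set.not_subset.mp (hcover s s.finite_toSet)
      refine ⟨z, hz, fun y hy => ?_⟩
      by_contra! hlt
      exact hzs (Set.mem_biUnion hy (mem_ball'.mpr hlt))
  have hdisj : Pairwise fun m n => Disjoint (ball (x m) (ε / 2)) (ball (x n) (ε / 2)) := by
    intro m n hmn
    rcases hmn.lt_or_gt with h | h
    · exact ball_disjoint_ball (by linarith [hsep m n h])
    · exact ball_disjoint_ball (by linarith [hsep n m h, dist_comm (x m) (x n)])
  have hunion : ν (⋃ n, ball (x n) (ε / 2)) ≠ ⊤ := by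
    refine ne_top_of_le_ne_top (hfin (ε / 2 + R)) (measure_mono (Set.iUnion_subset fun n => ?_))
    exact ball_subset_ball' (by linarith [mem_ball.mp (hxR n)])
  have hfinite := Measure.finite_const_le_meas_of_disjoint_iUnion ν
    (measure_ball_pos ν 1 (half_pos hε)) (fun n => measurableSet_ball) hdisj hunion
  simp only [measure_ball_eq_measure_ball_one, le_refl, Set.ofPred_true] at hfinite
  exact Set.infinite_univ hfinite

theorem secondCountableTopology_of_measure_ball_ne_top (hfin : ∀ r, ν (ball (1 : G) r) ≠ ⊤) :
    SecondCountableTopology G := by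
  have : TopologicalSpace.SeparableSpace G := by
    rw [← TopologicalSpace.isSeparable_univ_iff, ← iUnion_ball_nat 1]
    exact .iUnion fun n => (totallyBounded_ball_one ν hfin n).isSeparable
  exact UniformSpace.secondCountable_of_separable G

end InvariantMetric

section CompactSubgroup

variable {G : Type*} [Group G] [TopologicalSpace G] [IsTopologicalGroup G] {K : Subgroup G}

theorem exists_nhds_one_disjoint_mul_subgroup (hK : IsClosed (K : Set G)) {z : G} (hz : z ∉ K) :
    ∃ V ∈ 𝓝 (1 : G), Disjoint (V * K) (z • (V * K)) := by
  have hcont : Tendsto (fun p : G × G => p.1⁻¹ * z * p.2) (𝓝 1 ×ˢ 𝓝 1) (𝓝 z) := by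
    rw [← nhds_prod_eq]
    exact ((continuous_fst.inv.mul continuous_const).mul continuous_snd).tendsto' _ _ (by simp)
  obtain ⟨V, hV, hVK⟩ := eventually_prod_self_iff (r := fun v v' => v⁻¹ * z * v' ∉ K) |>.mp
    (hcont.eventually (hK.isOpen_compl.mem_nhds hz))
  refine ⟨V, hV, Set.disjoint_left.mpr ?_⟩
  rintro _ ⟨v, hv, k, hk, rfl⟩ hmem
  obtain ⟨v', hv', k', hk', hvk'⟩ := Set.mem_smul_set_iff_inv_smul_mem.mp hmem
  refine hVK v hv v' hv' ?_
  have hzv : v⁻¹ * z * v' = k * k'⁻¹ := by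
    simp only [smul_eq_mul] at hvk'
    rw [eq_mul_inv_iff_mul_eq, mul_assoc, hvk']
    group
  exact hzv ▸ mul_mem hk (inv_mem hk')

variable [MeasurableSpace G] [BorelSpace G]

/-- `N` consists of the `x` for which `x K` meets `toMeasurable ν T` in a set of positive Haar
measure of `K`; left invariance of that Haar measure makes `N` a union of cosets `x K`. -/
theorem exists_measurable_null_superset_mul_mem [SecondCountableTopology G] (ν : Measure G)
    [ν.IsMulLeftInvariant] [SigmaFinite ν] (hK : IsCompact (K : Set G)) {T : Set G}
    (hT : ν T = 0) (hTK : ∀ x ∈ T, ∀ k ∈ K, x * k ∈ T) :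
    ∃ N, MeasurableSet N ∧ ν N = 0 ∧ T ⊆ N ∧ ∀ x ∈ N, ∀ k ∈ K, x * k ∈ N := by
  have : CompactSpace K := isCompact_iff_compactSpace.mp hK
  let μ : Measure K := Measure.haar
  let S : Set (G × K) := {p | p.1 * p.2 ∈ toMeasurable ν T}
  have hS : MeasurableSet S :=
    (measurable_fst.mul (measurable_subtype_coe.comp measurable_snd))
      (measurableSet_toMeasurable ν T)
  let u : G → ℝ≥0∞ := fun x => μ (Prod.mk x ⁻¹' S)
  have hu : Measurable u := measurable_measure_prodMk_left hS
  have hu_ae : u =ᵐ[ν] 0 := by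
    refine (Measure.measure_prod_null hS).mp ?_
    rw [Measure.prod_apply_symm hS]
    have hslice (k : K) : ν ((fun x => (x, k)) ⁻¹' S) = 0 :=
      (measure_mul_right_null ν (k : G)).mpr ((measure_toMeasurable T).trans hT)
    simp [hslice]
  refine ⟨{x | u x ≠ 0}, hu (measurableSet_singleton 0).compl, ae_iff.mp hu_ae, ?_, ?_⟩
  · intro x hx
    have : Prod.mk x ⁻¹' S = Set.univ := Set.eq_univ_of_forall fun k =>
      subset_toMeasurable ν T (hTK x hx k k.2)
    simpa [u, this] using NeZero.ne μ
  · intro x hx k hk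
    have : Prod.mk (x * k) ⁻¹' S = (fun k' : K => ⟨k, hk⟩ * k') ⁻¹' (Prod.mk x ⁻¹' S) := by
      ext k'
      simp [S, mul_assoc]
    simpa [u, this, measure_preimage_mul] using hx

theorem ae_map_quotientMk_of_ae [SecondCountableTopology G] (ν : Measure G)
    [ν.IsMulLeftInvariant] [SigmaFinite ν] (hK : IsCompact (K : Set G)) {p : G ⧸ K → Prop}
    (h : ∀ᵐ x : G ∂ν, p x) : ∀ᵐ y ∂ν.map (QuotientGroup.mk : G → G ⧸ K), p y := by
  obtain ⟨N, hNm, hN0, hTN, hNK⟩ := exists_measurable_null_superset_mul_mem ν hK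
    (T := {x | ¬ p x}) (ae_iff.mp h)
    fun x hx k hk => by simpa [QuotientGroup.mk_mul_of_mem x hk] using hx
  have hpre : (↑) ⁻¹' ((↑) '' N : Set (G ⧸ K)) = N := by
    refine Set.Subset.antisymm ?_ (Set.subset_preimage_image _ _)
    rintro x ⟨y, hy, hyx⟩
    simpa using hNK y hy _ (QuotientGroup.eq.mp hyx)
  have hNm' : MeasurableSet ((↑) '' N : Set (G ⧸ K)) := by
    rw [measurableSet_quotient]
    exact hpre.symm ▸ hNm
  -- `{y | ¬ p y}` need not be measurable: cover it by the image of the measurable hull `N`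
  rw [ae_iff]
  refine measure_mono_null ?_ ((Measure.map_apply measurable_quotient_mk'' hNm').trans ?_)
  · intro y hy
    obtain ⟨x, rfl⟩ := QuotientGroup.mk_surjective y
    exact ⟨x, hTN hy, rfl⟩
  · exact hpre.symm ▸ hN0

end CompactSubgroup

namespace Stmt3

section Atoms

variable {G : Type*} [MetricSpace G] [MeasurableSpace G] (ν : Measure G) {q : ℝ≥0∞}

theorem isAtom1q_zero [Nonempty G] : IsAtom1q ν q 0 :=
  ⟨aestronglyMeasurable_const,
    Or.inl ⟨Classical.arbitrary G, 1, one_pos, by simp, by simp, by simp⟩⟩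

variable {ν} in
theorem IsAtom1q.eLpNorm_one_le_one (hq : 1 ≤ q) {a : G → ℂ} (ha : IsAtom1q ν q a) :
    eLpNorm a 1 ν ≤ 1 := by
  obtain ⟨hmeas, ⟨x, r, -, hsupp, hnorm, -⟩ | ⟨huniv, rfl⟩⟩ := ha
  · rw [← eLpNorm_restrict_eq_of_support_subset hsupp]
    calc eLpNorm a 1 (ν.restrict (ball x r))
        ≤ eLpNorm a q (ν.restrict (ball x r)) * ν (ball x r) ^ (-(1 / q.toReal - 1)) := by
          simpa [Measure.restrict_apply_univ, neg_sub] using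
            eLpNorm_le_eLpNorm_mul_rpow_measure_univ hq hmeas.restrict
      _ ≤ ν (ball x r) ^ (1 / q.toReal - 1) * (ν (ball x r) ^ (1 / q.toReal - 1))⁻¹ := by
          rw [ENNReal.rpow_neg]
          gcongr
          exact (eLpNorm_mono_measure a Measure.restrict_le_self).trans hnorm
      _ ≤ 1 := ENNReal.mul_inv_le_one _
  · simp [eLpNorm_one_eq_lintegral_enorm, huniv]

theorem isAtom1q_indicator_sub [ν.IsOpenPosMeasure] {A A' : Set G} (hA : MeasurableSet A)
    (hA' : MeasurableSet A') {x : G} {r : ℝ} (hr : 0 < r) (hB : ν (ball x r) ≠ ⊤)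
    (hAB : A ⊆ ball x r) (hA'B : A' ⊆ ball x r) (hAA' : ν A = ν A') :
    IsAtom1q ν q fun y =>
      ((ν (ball x r)).toReal⁻¹ : ℂ) * (A.indicator 1 y - A'.indicator 1 y) := by
  set B := ball x r
  set κ : ℂ := ((ν B).toReal⁻¹ : ℂ)
  have hB0 : ν B ≠ 0 := (measure_ball_pos ν x hr).ne'
  have hmeas : Measurable fun y => κ * (A.indicator 1 y - A'.indicator 1 y) :=
    ((measurable_const.indicator hA).sub (measurable_const.indicator hA')).const_mul κ
  have hsupp : ∀ y ∉ B, κ * (A.indicator 1 y - A'.indicator 1 y) = 0 := fun y hy => by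
    simp [Set.indicator_of_notMem (fun h => hy (hAB h)),
      Set.indicator_of_notMem (fun h => hy (hA'B h))]
  refine ⟨hmeas.aestronglyMeasurable,
    Or.inl ⟨x, r, hr, Function.support_subset_iff'.mpr hsupp, ?_, ?_⟩⟩
  · have hbound (y : G) :
        ‖κ * (A.indicator 1 y - A'.indicator 1 y)‖ ≤ ‖B.indicator (fun _ => κ) y‖ := by
      by_cases hy : y ∈ B
      · rw [Set.indicator_of_mem hy, norm_mul]
        refine mul_le_of_le_one_right (norm_nonneg _) ?_
        by_cases h : y ∈ A <;> by_cases h' : y ∈ A' <;> simp [h, h']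
      · simp [hsupp y hy, Set.indicator_of_notMem hy]
    have hκ : ‖κ‖ₑ = (ν B)⁻¹ := by
      rw [← ofReal_norm, norm_inv, Complex.norm_real, Real.norm_of_nonneg ENNReal.toReal_nonneg,
        ENNReal.ofReal_inv_of_pos (ENNReal.toReal_pos hB0 hB), ENNReal.ofReal_toReal hB]
    calc eLpNorm _ q ν ≤ eLpNorm (B.indicator fun _ => κ) q ν := eLpNorm_mono hbound
      _ ≤ (ν B)⁻¹ * ν B ^ (1 / q.toReal) := hκ ▸ eLpNorm_indicator_const_le κ q
      _ = ν B ^ (1 / q.toReal - 1) := by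
        rw [← ENNReal.rpow_neg_one, ← ENNReal.rpow_add _ _ hB0 hB, neg_add_eq_sub]
  · have hint : ∀ s ⊆ B, MeasurableSet s → Integrable (s.indicator (1 : G → ℂ)) ν :=
      fun s hsB hs => (integrable_indicator_iff hs).mpr <| integrableOn_const
        (ne_top_of_le_ne_top hB (measure_mono hsB))
    rw [integral_const_mul, integral_sub (hint A hAB hA) (hint A' hA'B hA'), Pi.one_def,
      integral_indicator_const _ hA, integral_indicator_const _ hA', measureReal_def,
      measureReal_def, hAA', sub_self, mul_zero]

variable {ν} in
theorem ae_summable_of_isAtom1q (hq : 1 ≤ q) {ι : Type*} [Countable ι] {c : ι → ℂ}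
    {a : ι → G → ℂ} (ha : ∀ i, IsAtom1q ν q (a i)) (hc : ∑' i, ‖c i‖ₑ ≠ ⊤) :
    ∀ᵐ x ∂ν, Summable fun i => c i * a i x := by
  have hL1 : ∑' i, eLpNorm (c i • a i) 1 ν ≠ ⊤ := by
    refine ne_top_of_le_ne_top hc (ENNReal.tsum_le_tsum fun i => ?_)
    rw [eLpNorm_const_smul]
    exact mul_le_of_le_one_right' ((ha i).eLpNorm_one_le_one hq)
  filter_upwards [summable_norm_of_tsum_eLpNorm_ne_top le_rfl
    (fun i => (ha i).1.const_smul (c i)) hL1] with x hx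
  exact .of_norm hx

end Atoms

section Decomposition

variable {G : Type*} [Group G] [MetricSpace G] [MeasurableSpace G]
  (ν : Measure G) (K : Subgroup G) (q : ℝ≥0∞)

structure IsAtomicDecomposition (f : G ⧸ K → ℂ) (c : ℕ → ℂ) (a : ℕ → G → ℂ) : Prop where
  isAtom1q : ∀ j, IsAtom1q ν q (a j)
  rightInvariant : ∀ j, RightInvariant K (a j)
  summable : Summable fun j => ‖c j‖
  ae_eq : ∀ᵐ x : G ∂ν, f x = ∑' j, c j * a j x

variable {ν K q}

theorem ofReal_tsum_norm_eq_tsum_enorm {ι E : Type*} [SeminormedAddGroup E] {c : ι → E}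
    (hc : Summable fun j => ‖c j‖) : ENNReal.ofReal (∑' j, ‖c j‖) = ∑' j, ‖c j‖ₑ := by
  simp only [ENNReal.ofReal_tsum_of_nonneg (fun _ => norm_nonneg _) hc, ofReal_norm]

theorem IsAtomicDecomposition.hardyNorm_le {f : G ⧸ K → ℂ} {c : ℕ → ℂ} {a : ℕ → G → ℂ}
    (h : IsAtomicDecomposition ν K q f c a) : hardyNorm ν K q f ≤ ∑' j, ‖c j‖ₑ := by
  rw [← ofReal_tsum_norm_eq_tsum_enorm h.summable]
  exact iInf_le_of_le c <| iInf_le_of_le a <| iInf_le_of_le h.isAtom1q <|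
    iInf_le_of_le h.rightInvariant <| iInf_le_of_le h.summable <| iInf_le_of_le h.ae_eq le_rfl

theorem le_hardyNorm {f : G ⧸ K → ℂ} {t : ℝ≥0∞}
    (h : ∀ c a, IsAtomicDecomposition ν K q f c a → t ≤ ∑' j, ‖c j‖ₑ) :
    t ≤ hardyNorm ν K q f := by
  simp only [hardyNorm, le_iInf_iff]
  intro c a ha hinv hc hf
  rw [ofReal_tsum_norm_eq_tsum_enorm hc]
  exact h c a ⟨ha, hinv, hc, hf⟩

theorem exists_isAtomicDecomposition_lt {f : G ⧸ K → ℂ} {t : ℝ≥0∞}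
    (h : hardyNorm ν K q f < t) :
    ∃ c a, IsAtomicDecomposition ν K q f c a ∧ ∑' j, ‖c j‖ₑ < t := by
  by_contra! H
  exact (le_hardyNorm H).not_gt h

theorem IsAtomicDecomposition.congr_ae {f g : G ⧸ K → ℂ} {c : ℕ → ℂ} {a : ℕ → G → ℂ}
    (h : IsAtomicDecomposition ν K q f c a) (hfg : ∀ᵐ x : G ∂ν, f x = g x) :
    IsAtomicDecomposition ν K q g c a :=
  ⟨h.isAtom1q, h.rightInvariant, h.summable, by
    filter_upwards [h.ae_eq, hfg] with x hf hg
    rw [← hg, hf]⟩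

theorem hardyNorm_congr_ae {f g : G ⧸ K → ℂ} (hfg : ∀ᵐ x : G ∂ν, f x = g x) :
    hardyNorm ν K q f = hardyNorm ν K q g :=
  le_antisymm (le_hardyNorm fun _ _ h => (h.congr_ae (hfg.mono fun _ => Eq.symm)).hardyNorm_le)
    (le_hardyNorm fun _ _ h => (h.congr_ae hfg).hardyNorm_le)

theorem hardyNorm_zero : hardyNorm ν K q 0 = 0 :=
  nonpos_iff_eq_zero.mp <| IsAtomicDecomposition.hardyNorm_le (c := 0) (a := 0)
    ⟨fun _ => isAtom1q_zero ν, fun _ _ _ _ => rfl, by simp, by simp⟩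
    |>.trans_eq (by simp)

theorem IsAtomicDecomposition.const_smul {f : G ⧸ K → ℂ} {c : ℕ → ℂ} {a : ℕ → G → ℂ}
    (h : IsAtomicDecomposition ν K q f c a) (s : ℂ) :
    IsAtomicDecomposition ν K q (s • f) (s • c) a :=
  ⟨h.isAtom1q, h.rightInvariant, by simpa [norm_mul] using h.summable.mul_left ‖s‖,
    h.ae_eq.mono fun x hx => by simp [hx, ← _root_.tsum_mul_left, mul_assoc]⟩

theorem hardyNorm_smul_le (s : ℂ) (f : G ⧸ K → ℂ) :
    hardyNorm ν K q (s • f) ≤ ‖s‖ₑ * hardyNorm ν K q f := by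
  rcases eq_or_ne s 0 with rfl | hs
  · simp [hardyNorm_zero]
  rw [mul_comm, ← ENNReal.div_le_iff (enorm_ne_zero.mpr hs) enorm_ne_top]
  refine le_hardyNorm fun c a h => ENNReal.div_le_of_le_mul' ?_
  calc hardyNorm ν K q (s • f) ≤ ∑' j, ‖(s • c) j‖ₑ := (h.const_smul s).hardyNorm_le
    _ = ‖s‖ₑ * ∑' j, ‖c j‖ₑ := by simp [enorm_mul, ENNReal.tsum_mul_left]

theorem hardyNorm_smul (s : ℂ) (f : G ⧸ K → ℂ) :
    hardyNorm ν K q (s • f) = ‖s‖ₑ * hardyNorm ν K q f := by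
  rcases eq_or_ne s 0 with rfl | hs
  · simp [hardyNorm_zero]
  refine le_antisymm (hardyNorm_smul_le s f) ?_
  have h := hardyNorm_smul_le (ν := ν) (q := q) s⁻¹ (s • f)
  rw [inv_smul_smul₀ hs, enorm_inv hs] at h
  calc ‖s‖ₑ * hardyNorm ν K q f ≤ ‖s‖ₑ * (‖s‖ₑ⁻¹ * hardyNorm ν K q (s • f)) := by gcongr
    _ = hardyNorm ν K q (s • f) := by
      rw [← mul_assoc, ENNReal.mul_inv_cancel (enorm_ne_zero.mpr hs) enorm_ne_top, one_mul]

end Decomposition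

section Series

variable {G : Type*} [Group G] [MetricSpace G] [MeasurableSpace G]
  {ν : Measure G} {K : Subgroup G} {q : ℝ≥0∞}

theorem ae_hasSum_of_isAtomicDecomposition (hq : 1 ≤ q) {F : ℕ → G ⧸ K → ℂ}
    {c : ℕ → ℕ → ℂ} {a : ℕ → ℕ → G → ℂ}
    (h : ∀ n, IsAtomicDecomposition ν K q (F n) (c n) (a n))
    (hc : ∑' p : ℕ × ℕ, ‖c p.1 p.2‖ₑ ≠ ⊤) :
    ∀ᵐ x : G ∂ν, HasSum (fun n => F n x) (∑' p : ℕ × ℕ, c p.1 p.2 * a p.1 p.2 x) := by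
  filter_upwards [ae_summable_of_isAtom1q hq (a := fun p => a p.1 p.2)
    (fun p => (h p.1).isAtom1q p.2) hc, ae_all_iff.mpr fun n => (h n).ae_eq] with x hx hF
  exact hx.hasSum.prod_fiberwise fun n => hF n ▸ (hx.prod_factor n).hasSum

theorem exists_isAtomicDecomposition_tsum_lt (hq : 1 ≤ q) (F : ℕ → G ⧸ K → ℂ) {t : ℝ≥0∞}
    (ht : ∑' n, hardyNorm ν K q (F n) < t) :
    ∃ c a, (∀ᵐ x : G ∂ν, Summable fun n => F n x) ∧
      IsAtomicDecomposition ν K q (fun y => ∑' n, F n y) c a ∧ ∑' j, ‖c j‖ₑ < t := by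
  obtain ⟨ε, hε0, hε⟩ := ENNReal.exists_pos_sum_of_countable' (tsub_pos_of_lt ht).ne' ℕ
  have hF n : hardyNorm ν K q (F n) < hardyNorm ν K q (F n) + ε n :=
    ENNReal.lt_add_right (ne_top_of_le_ne_top ht.ne_top (ENNReal.le_tsum n)) (hε0 n).ne'
  choose c a hdec hlt using fun n => exists_isAtomicDecomposition_lt (hF n)
  have hsum : ∑' p : ℕ × ℕ, ‖c p.1 p.2‖ₑ < t := calc
    ∑' p : ℕ × ℕ, ‖c p.1 p.2‖ₑ = ∑' n, ∑' j, ‖c n j‖ₑ :=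
      ENNReal.tsum_prod (f := fun n j => ‖c n j‖ₑ)
    _ ≤ ∑' n, (hardyNorm ν K q (F n) + ε n) := ENNReal.tsum_le_tsum fun n => (hlt n).le
    _ = ∑' n, hardyNorm ν K q (F n) + ∑' n, ε n := ENNReal.tsum_add
    _ < ∑' n, hardyNorm ν K q (F n) + (t - ∑' n, hardyNorm ν K q (F n)) :=
      ENNReal.add_lt_add_left ht.ne_top hε
    _ = t := add_tsub_cancel_of_le ht.le
  have hae := ae_hasSum_of_isAtomicDecomposition hq hdec hsum.ne_top
  let e := Nat.pairEquiv.symm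
  have he : ∑' i, ‖c (e i).1 (e i).2‖ₑ = ∑' p : ℕ × ℕ, ‖c p.1 p.2‖ₑ :=
    e.tsum_eq fun p => ‖c p.1 p.2‖ₑ
  refine ⟨fun i => c (e i).1 (e i).2, fun i => a (e i).1 (e i).2,
    hae.mono fun x hx => hx.summable,
    ⟨fun i => (hdec _).isAtom1q _, fun i => (hdec _).rightInvariant _,
      tsum_enorm_ne_top_iff_summable_norm.mp (he ▸ hsum.ne_top), ?_⟩, he ▸ hsum⟩
  filter_upwards [hae] with x hx
  rw [hx.tsum_eq]
  exact (e.tsum_eq fun p => c p.1 p.2 * a p.1 p.2 x).symm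

theorem hardyNorm_tsum_le (hq : 1 ≤ q) (F : ℕ → G ⧸ K → ℂ) :
    hardyNorm ν K q (fun y => ∑' n, F n y) ≤ ∑' n, hardyNorm ν K q (F n) :=
  le_of_forall_gt fun _ ht =>
    let ⟨_, _, _, hdec, hlt⟩ := exists_isAtomicDecomposition_tsum_lt hq F ht
    hdec.hardyNorm_le.trans_lt hlt

theorem ae_summable_of_tsum_hardyNorm_ne_top (hq : 1 ≤ q) {F : ℕ → G ⧸ K → ℂ}
    (hF : ∑' n, hardyNorm ν K q (F n) ≠ ⊤) : ∀ᵐ x : G ∂ν, Summable fun n => F n x :=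
  let ⟨_, _, hsum, _⟩ :=
    exists_isAtomicDecomposition_tsum_lt hq F (ENNReal.lt_add_right hF one_ne_zero)
  hsum

theorem hardyNorm_add_le (hq : 1 ≤ q) (f g : G ⧸ K → ℂ) :
    hardyNorm ν K q (f + g) ≤ hardyNorm ν K q f + hardyNorm ν K q g := by
  let F : ℕ → G ⧸ K → ℂ := fun n => if n = 0 then f else if n = 1 then g else 0
  have hF : ∀ n ∉ Finset.range 2, F n = 0 := fun n hn => by
    simp only [Finset.mem_range] at hn
    simp [F, show n ≠ 0 by omega, show n ≠ 1 by omega]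
  have hfg : (fun y => ∑' n, F n y) = f + g := funext fun y => by
    rw [tsum_eq_sum fun n hn => congrFun (hF n hn) y]
    simp [F, Finset.sum_range_succ]
  calc hardyNorm ν K q (f + g) ≤ ∑' n, hardyNorm ν K q (F n) := hfg ▸ hardyNorm_tsum_le hq F
    _ = hardyNorm ν K q f + hardyNorm ν K q g := by
      rw [tsum_eq_sum fun n hn => by rw [hF n hn, hardyNorm_zero]]
      simp [F, Finset.sum_range_succ]

theorem ae_eq_zero_of_hardyNorm_eq_zero (hq : 1 ≤ q) {f : G ⧸ K → ℂ}
    (hf : hardyNorm ν K q f = 0) : ∀ᵐ x : G ∂ν, f x = 0 := by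
  filter_upwards [ae_summable_of_tsum_hardyNorm_ne_top hq (F := fun _ => f) (by simp [hf])]
    with x hx
  exact (summable_const_iff _).mp hx

theorem tendsto_hardyNorm_tsum_sub_sum (hq : 1 ≤ q) {F : ℕ → G ⧸ K → ℂ}
    (hF : ∑' n, hardyNorm ν K q (F n) ≠ ⊤) :
    Tendsto (fun N => hardyNorm ν K q fun y => ∑' n, F n y - ∑ n ∈ Finset.range N, F n y)
      atTop (𝓝 0) := by
  have htail N : hardyNorm ν K q (fun y => ∑' n, F n y - ∑ n ∈ Finset.range N, F n y) ≤
      ∑' n, hardyNorm ν K q (F (n + N)) := by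
    rw [hardyNorm_congr_ae (g := fun y => ∑' n, F (n + N) y)]
    · exact hardyNorm_tsum_le hq _
    · filter_upwards [ae_summable_of_tsum_hardyNorm_ne_top hq hF] with x hx
      rw [← hx.sum_add_tsum_nat_add N, add_sub_cancel_left]
  exact tendsto_of_tendsto_of_tendsto_of_le_of_le tendsto_const_nhds
    (ENNReal.tendsto_sum_nat_add _ hF) (fun _ => zero_le) htail

theorem hardyNorm_le_one_of_isAtom1q {f : G ⧸ K → ℂ} (hf : IsAtom1q ν q fun x => f x) :
    hardyNorm ν K q f ≤ 1 := by
  let c : ℕ → ℂ := fun j => if j = 0 then 1 else 0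
  have hc : ∀ j ≠ 0, c j = 0 := fun j hj => if_neg hj
  calc hardyNorm ν K q f ≤ ∑' j, ‖c j‖ₑ :=
        IsAtomicDecomposition.hardyNorm_le (a := fun _ (x : G) => f x)
          ⟨fun _ => hf, fun _ x k hk => by rw [QuotientGroup.mk_mul_of_mem x hk],
            summable_of_ne_finset_zero (s := {0}) fun j hj => by simp_all,
            .of_forall fun x => by rw [_root_.tsum_mul_right, tsum_ite_eq, one_mul]⟩
    _ = 1 := by rw [tsum_eq_single 0 fun j hj => by simp [hc j hj]]; simp [c]

end Series

section Nontrivial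

variable {G : Type*} [Group G] [MetricSpace G] [IsIsometricSMul G G] [IsTopologicalGroup G]
  [MeasurableSpace G] [OpensMeasurableSpace G] {ν : Measure G} [ν.IsMulLeftInvariant]
  [ν.IsOpenPosMeasure] {K : Subgroup G} {q : ℝ≥0∞}

theorem exists_hardyNorm_le_one_not_ae_eq_zero (hfin : ∀ r, ν (ball (1 : G) r) ≠ ⊤)
    (hK : IsCompact (K : Set G)) {z : G} (hz : z ∉ K) :
    ∃ f : G ⧸ K → ℂ, hardyNorm ν K q f ≤ 1 ∧
      ¬ f =ᵐ[ν.map (QuotientGroup.mk : G → G ⧸ K)] 0 := by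
  obtain ⟨V, hV, hdisj⟩ := exists_nhds_one_disjoint_mul_subgroup hK.isClosed hz
  obtain ⟨ε, hε, hεV⟩ := Metric.mem_nhds_iff.mp hV
  obtain ⟨ρ, hρ⟩ := hK.isBounded.subset_ball (1 : G)
  set B := ball (1 : G) ε
  set R := ε + dist z 1 + ρ
  set κ : ℂ := ((ν (ball 1 R)).toReal⁻¹ : ℂ)
  set A := B * (K : Set G)
  let π : G → G ⧸ K := QuotientGroup.mk
  have hA : π ⁻¹' (π '' B) = A := QuotientGroup.preimage_image_mk_eq_mul K B
  have hA' : π ⁻¹' (π '' (z • B)) = z • A := by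
    rw [QuotientGroup.preimage_image_mk_eq_mul, smul_mul_assoc]
  let f : G ⧸ K → ℂ := fun y => κ * ((π '' B).indicator 1 y - (π '' (z • B)).indicator 1 y)
  have hf : (fun x : G => f x) = fun x => κ * (A.indicator 1 x - (z • A).indicator 1 x) := by
    rw [← hA', ← hA]
    rfl
  have hAopen : IsOpen A := isOpen_ball.mul_right
  have hρ0 : 0 < ρ := pos_of_mem_ball (hρ K.one_mem)
  have hR : 0 < R := by positivity
  have hAR : A ⊆ ball 1 R := (mul_subset_ball_one subset_rfl hρ).trans
    (ball_subset_ball (by linarith [dist_nonneg (x := z) (y := 1)]))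
  have hA'R : z • A ⊆ ball 1 R := by
    rw [← smul_mul_assoc, Metric.smul_ball, smul_eq_mul, mul_one]
    exact mul_subset_ball_one (ball_subset_ball' le_rfl) hρ
  have hatom : IsAtom1q ν q fun x : G => f x :=
    hf ▸ isAtom1q_indicator_sub ν hAopen.measurableSet (hAopen.smul z).measurableSet hR (hfin R)
      hAR hA'R (measure_smul ν z _).symm
  refine ⟨f, hardyNorm_le_one_of_isAtom1q hatom, fun hf0 => ?_⟩
  have hae : ∀ᵐ x : G ∂ν, f x = 0 :=
    ae_of_ae_map measurable_quotient_mk''.aemeasurable hf0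
  refine (hAopen.measure_pos ν ⟨1 * 1, Set.mul_mem_mul (mem_ball_self hε) K.one_mem⟩).ne'
    (measure_mono_null (fun x hx => ?_) (ae_iff.mp hae))
  have hx' : x ∉ z • A :=
    Set.disjoint_left.mp (hdisj.mono (Set.mul_subset_mul_right hεV)
      (Set.smul_set_mono (Set.mul_subset_mul_right hεV))) hx
  have hκ : κ ≠ 0 := inv_ne_zero <| Complex.ofReal_ne_zero.mpr <|
    (ENNReal.toReal_pos (measure_ball_pos ν 1 hR).ne' (hfin R)).ne'
  simp [congrFun hf x, hx, hx', hκ]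

end Nontrivial

variable {G : Type*} [Group G] [MetricSpace G] [IsTopologicalGroup G]
  [MeasurableSpace G] [BorelSpace G] [LocallyCompactSpace G]

/-- **Proposition 1.** If `G ≠ K` then `H^{1,q}(G/K)` is nontrivial and Banach. -/
theorem hardy_nontrivial_and_banach
    (ν : Measure G) [ν.IsHaarMeasure]
    (hleft : ∀ g x y : G, dist (g * x) (g * y) = dist x y)
    -- the doubling condition
    (C : ℝ) (hC : ∀ (x : G) (r : ℝ), 0 < r →
      ν (ball x (2 * r)) ≤ ENNReal.ofReal C * ν (ball x r))
    (K : Subgroup G) (hK : IsCompact (K : Set G))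
    -- `G ≠ K`
    (hGK : ∃ x : G, x ∉ K)
    (q : ℝ≥0∞) (hq : 1 < q) :
    -- nontriviality
    (∃ f : G ⧸ K → ℂ, hardyNorm ν K q f ≠ ⊤ ∧
        ¬ (f =ᵐ[ν.map (QuotientGroup.mk : G → G ⧸ K)] 0)) ∧
    -- subadditivity of the norm
    (∀ f g : G ⧸ K → ℂ,
        hardyNorm ν K q (f + g) ≤ hardyNorm ν K q f + hardyNorm ν K q g) ∧
    -- absolute homogeneity of the norm
    (∀ (c : ℂ) (f : G ⧸ K → ℂ),
        hardyNorm ν K q (c • f) = ENNReal.ofReal ‖c‖ * hardyNorm ν K q f) ∧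
    -- definiteness (modulo `λ`-a.e. equality)
    (∀ f : G ⧸ K → ℂ, hardyNorm ν K q f = 0 →
        f =ᵐ[ν.map (QuotientGroup.mk : G → G ⧸ K)] 0) ∧
    -- completeness: every absolutely convergent series in `H^{1,q}(G/K)` converges
    (∀ f : ℕ → (G ⧸ K → ℂ), (∀ n, hardyNorm ν K q (f n) ≠ ⊤) →
        (∑' n, hardyNorm ν K q (f n)) ≠ ⊤ →
        ∃ g : G ⧸ K → ℂ, hardyNorm ν K q g ≠ ⊤ ∧
          Tendsto (fun N => hardyNorm ν K q
              (fun y => g y - ∑ n ∈ Finset.range N, f n y)) atTop (𝓝 0)) := by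
  have : IsIsometricSMul G G := ⟨fun g => Isometry.of_dist_eq (hleft g)⟩
  have hfin : ∀ r, ν (ball (1 : G) r) ≠ ⊤ := measure_ball_ne_top_of_doubling ν hC 1
  have : SecondCountableTopology G := secondCountableTopology_of_measure_ball_ne_top ν hfin
  obtain ⟨z, hz⟩ := hGK
  obtain ⟨f₀, hf₀, hf₀_ne⟩ := exists_hardyNorm_le_one_not_ae_eq_zero (q := q) hfin hK hz
  refine ⟨⟨f₀, ne_top_of_le_ne_top one_ne_top hf₀, hf₀_ne⟩, hardyNorm_add_le hq.le,
    fun c f => by rw [ofReal_norm, hardyNorm_smul],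
    fun f hf => ae_map_quotientMk_of_ae ν hK (ae_eq_zero_of_hardyNorm_eq_zero hq.le hf),
    fun F _ hF => ⟨fun y => ∑' n, F n y, ne_top_of_le_ne_top hF (hardyNorm_tsum_le hq.le F),
      tendsto_hardyNorm_tsum_sub_sum hq.le hF⟩⟩

end Stmt3
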